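/- Let N ≥ 1 and m ≥ 1 be integers and set p_m(t) = (1/(m!)²)·∏_{j=0}^{m} (j(j−N) − t). Then for every smooth function ψ on 𝔹_N and every ξ ∈ 𝔹_N, (m!)²·(1−|ξ|²)^{−m−1}·(p_m(Δ̃)ψ)(ξ) equals the value at ξ of the composition (|E+m|²−Δ)∘(|E+(m−1)|²−Δ)∘⋯∘(|E+0|²−Δ) applied to ψ. -/

import Mathlib

open MeasureTheory Metric Complex ComplexConjugate Finset
open scoped ENNReal

noncomputable section

/-- `ℂ^N` with its (product) Lebesgue measure; `EuclideanSpace ℂ (Fin N)` is definitionally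
`Fin N → ℂ`. -/
instance (N : ℕ) : MeasureSpace (EuclideanSpace ℂ (Fin N)) where
  volume := Measure.map (WithLp.toLp 2) (volume : Measure (Fin N → ℂ))

variable {N : ℕ}

/-- Hermitian inner product `⟨z,w⟩ = Σ z_j conj(w_j)`. -/
def hinner (z w : EuclideanSpace ℂ (Fin N)) : ℂ := ∑ j, z j * conj (w j)

/-- Lebesgue measure on `ℂ^N` normalized so that the unit ball has measure 1. -/
def volB (N : ℕ) : Measure (EuclideanSpace ℂ (Fin N)) :=
  (volume (ball (0 : EuclideanSpace ℂ (Fin N)) 1))⁻¹ • volume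

/-- The Berezin transform of `u`. -/
def berezin (u : EuclideanSpace ℂ (Fin N) → ℂ) (z : EuclideanSpace ℂ (Fin N)) : ℂ :=
  (((1 - ‖z‖ ^ 2) ^ (N + 1) : ℝ) : ℂ) *
    ∫ ξ in ball (0 : EuclideanSpace ℂ (Fin N)) 1,
      u ξ / ((‖1 - hinner z ξ‖ ^ (2 * (N + 1)) : ℝ) : ℂ) ∂(volB N)

/-- Pluriharmonic on the unit ball: sum of a holomorphic and an anti-holomorphic function. -/
def Pluriharmonic (h : EuclideanSpace ℂ (Fin N) → ℂ) : Prop :=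
  ∃ f g : EuclideanSpace ℂ (Fin N) → ℂ,
    DifferentiableOn ℂ f (ball 0 1) ∧ DifferentiableOn ℂ g (ball 0 1) ∧
      ∀ z ∈ ball (0 : EuclideanSpace ℂ (Fin N)) 1, h z = f z + conj (g z)

/-- `B(u)` has finite rank: it is a finite sum `Σ f_j conj(g_j)` with `f_j, g_j` holomorphic. -/
def FiniteRankBerezin (u : EuclideanSpace ℂ (Fin N) → ℂ) : Prop :=
  ∃ (n : ℕ) (f g : Fin n → EuclideanSpace ℂ (Fin N) → ℂ),
    (∀ j, DifferentiableOn ℂ (f j) (ball 0 1)) ∧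
    (∀ j, DifferentiableOn ℂ (g j) (ball 0 1)) ∧
    ∀ z ∈ ball (0 : EuclideanSpace ℂ (Fin N)) 1,
      berezin u z = ∑ j, f j z * conj (g j z)

/-- Wirtinger derivative `∂/∂z_j`. -/
def wdz (j : Fin N) (f : EuclideanSpace ℂ (Fin N) → ℂ) (z : EuclideanSpace ℂ (Fin N)) : ℂ :=
  (1 / 2 : ℂ) * (fderiv ℝ f z (EuclideanSpace.single j 1)
    - Complex.I * fderiv ℝ f z (EuclideanSpace.single j Complex.I))

/-- Wirtinger derivative `∂/∂conj(z_j)`. -/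
def wdzbar (j : Fin N) (f : EuclideanSpace ℂ (Fin N) → ℂ) (z : EuclideanSpace ℂ (Fin N)) : ℂ :=
  (1 / 2 : ℂ) * (fderiv ℝ f z (EuclideanSpace.single j 1)
    + Complex.I * fderiv ℝ f z (EuclideanSpace.single j Complex.I))

/-- The radial operator `E = Σ z_j ∂/∂z_j`. -/
def Eop (f : EuclideanSpace ℂ (Fin N) → ℂ) (z : EuclideanSpace ℂ (Fin N)) : ℂ :=
  ∑ j, z j * wdz j f z

/-- The radial operator `Ē = Σ conj(z_j) ∂/∂conj(z_j)`. -/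
def Ebarop (f : EuclideanSpace ℂ (Fin N) → ℂ) (z : EuclideanSpace ℂ (Fin N)) : ℂ :=
  ∑ j, conj (z j) * wdzbar j f z

/-- The Laplacian `Δ = Σ ∂²/(∂z_j ∂conj(z_j))`. -/
def lapOp (f : EuclideanSpace ℂ (Fin N) → ℂ) (z : EuclideanSpace ℂ (Fin N)) : ℂ :=
  ∑ j, wdz j (wdzbar j f) z

/-- The operator `|E+s|² − Δ = (E+s)∘(Ē+s) − Δ`. -/
def stepOp (s : ℝ) (f : EuclideanSpace ℂ (Fin N) → ℂ) : EuclideanSpace ℂ (Fin N) → ℂ :=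
  fun z => (Eop (fun w => Ebarop f w + (s : ℂ) * f w) z
      + (s : ℂ) * (Ebarop f z + (s : ℂ) * f z)) - lapOp f z

/-- The composition `(|E+m|²−Δ)∘(|E+(m−1)|²−Δ)∘⋯∘(|E+0|²−Δ)`. -/
def iterOp : ℕ → (EuclideanSpace ℂ (Fin N) → ℂ) → (EuclideanSpace ℂ (Fin N) → ℂ)
  | 0 => stepOp 0
  | (m + 1) => fun f => stepOp (m + 1) (iterOp m f)

/-- The invariant Laplacian `Δ̃ = (1−|z|²)(Δ − |E|²)`. -/
def invLap (f : EuclideanSpace ℂ (Fin N) → ℂ) (z : EuclideanSpace ℂ (Fin N)) : ℂ :=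
  (((1 - ‖z‖ ^ 2 : ℝ)) : ℂ) * (lapOp f z - Eop (Ebarop f) z)

/-- The operator `c − Δ̃` (a single factor of `p_m(Δ̃)`). -/
def factorOp (c : ℂ) (f : EuclideanSpace ℂ (Fin N) → ℂ) : EuclideanSpace ℂ (Fin N) → ℂ :=
  fun z => c * f z - invLap f z

/-- The product of operators `∏_{j=0}^{m} (j(j−N) − Δ̃)`. -/
def prodOp (N : ℕ) : ℕ → (EuclideanSpace ℂ (Fin N) → ℂ) → (EuclideanSpace ℂ (Fin N) → ℂ)
  | 0 => factorOp ((0 : ℂ) * ((0 : ℂ) - (N : ℂ)))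
  | (m + 1) => fun f => factorOp (((m : ℂ) + 1) * (((m : ℂ) + 1) - (N : ℂ))) (prodOp N m f)

open Classical in
/-- The Möbius automorphism `φ_w` of the unit ball interchanging `0` and `w`. -/
def mobius (w z : EuclideanSpace ℂ (Fin N)) : EuclideanSpace ℂ (Fin N) :=
  ((1 - hinner z w)⁻¹ : ℂ) •
    (w - (if w = 0 then 0 else (hinner z w / hinner w w) • w)
      - ((Real.sqrt (1 - ‖w‖ ^ 2) : ℝ) : ℂ) •
        (z - (if w = 0 then 0 else (hinner z w / hinner w w) • w)))

/-! ### Auxiliary infrastructure for stmt3 -/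

abbrev EC (N : ℕ) := EuclideanSpace ℂ (Fin N)

def coordL (j : Fin N) : EC N →L[ℝ] ℂ :=
  (EuclideanSpace.proj j : EC N →L[ℂ] ℂ).restrictScalars ℝ

def coordbarL (j : Fin N) : EC N →L[ℝ] ℂ :=
  (Complex.conjCLE : ℂ ≃L[ℝ] ℂ).toContinuousLinearMap.comp (coordL j)

lemma wdz_congr {f g : EC N → ℂ} {z : EC N} (j : Fin N) (h : f =ᶠ[nhds z] g) :
    wdz j f z = wdz j g z := by
  unfold wdz; rw [h.fderiv_eq]

lemma wdzbar_congr {f g : EC N → ℂ} {z : EC N} (j : Fin N) (h : f =ᶠ[nhds z] g) :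
    wdzbar j f z = wdzbar j g z := by
  unfold wdzbar; rw [h.fderiv_eq]

lemma wdz_add {f g : EC N → ℂ} {z : EC N} (j : Fin N)
    (hf : DifferentiableAt ℝ f z) (hg : DifferentiableAt ℝ g z) :
    wdz j (fun w => f w + g w) z = wdz j f z + wdz j g z := by
  unfold wdz; rw [fderiv_fun_add hf hg]; simp; ring

lemma wdzbar_add {f g : EC N → ℂ} {z : EC N} (j : Fin N)
    (hf : DifferentiableAt ℝ f z) (hg : DifferentiableAt ℝ g z) :
    wdzbar j (fun w => f w + g w) z = wdzbar j f z + wdzbar j g z := by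
  unfold wdzbar; rw [fderiv_fun_add hf hg]; simp; ring

lemma wdz_mul {f g : EC N → ℂ} {z : EC N} (j : Fin N)
    (hf : DifferentiableAt ℝ f z) (hg : DifferentiableAt ℝ g z) :
    wdz j (fun w => f w * g w) z = wdz j f z * g z + f z * wdz j g z := by
  unfold wdz; rw [fderiv_fun_mul hf hg]; simp [smul_eq_mul]; ring

lemma wdzbar_mul {f g : EC N → ℂ} {z : EC N} (j : Fin N)
    (hf : DifferentiableAt ℝ f z) (hg : DifferentiableAt ℝ g z) :
    wdzbar j (fun w => f w * g w) z = wdzbar j f z * g z + f z * wdzbar j g z := by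
  unfold wdzbar; rw [fderiv_fun_mul hf hg]; simp [smul_eq_mul]; ring

lemma wdz_const_mul {f : EC N → ℂ} {z : EC N} (j : Fin N) (c : ℂ)
    (hf : DifferentiableAt ℝ f z) :
    wdz j (fun w => c * f w) z = c * wdz j f z := by
  unfold wdz; rw [fderiv_const_mul hf]; simp [smul_eq_mul]; ring

lemma wdzbar_const_mul {f : EC N → ℂ} {z : EC N} (j : Fin N) (c : ℂ)
    (hf : DifferentiableAt ℝ f z) :
    wdzbar j (fun w => c * f w) z = c * wdzbar j f z := by
  unfold wdzbar; rw [fderiv_const_mul hf]; simp [smul_eq_mul]; ring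

lemma wdz_const (z : EC N) (j : Fin N) (c : ℂ) : wdz j (fun _ => c) z = 0 := by
  unfold wdz; rw [fderiv_fun_const]; simp

lemma wdzbar_const (z : EC N) (j : Fin N) (c : ℂ) : wdzbar j (fun _ => c) z = 0 := by
  unfold wdzbar; rw [fderiv_fun_const]; simp

lemma wdz_sum {ι : Type*} (s : Finset ι) {F : ι → EC N → ℂ} {z : EC N} (j : Fin N)
    (h : ∀ i ∈ s, DifferentiableAt ℝ (F i) z) :
    wdz j (fun w => ∑ i ∈ s, F i w) z = ∑ i ∈ s, wdz j (F i) z := by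
  unfold wdz; rw [fderiv_fun_sum h]
  simp only [ContinuousLinearMap.sum_apply, Finset.mul_sum, ← Finset.sum_sub_distrib]

lemma wdzbar_sum {ι : Type*} (s : Finset ι) {F : ι → EC N → ℂ} {z : EC N} (j : Fin N)
    (h : ∀ i ∈ s, DifferentiableAt ℝ (F i) z) :
    wdzbar j (fun w => ∑ i ∈ s, F i w) z = ∑ i ∈ s, wdzbar j (F i) z := by
  unfold wdzbar; rw [fderiv_fun_sum h]
  simp only [ContinuousLinearMap.sum_apply, Finset.mul_sum, ← Finset.sum_add_distrib]

lemma wdz_coord (z : EC N) (i j : Fin N) :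
    wdz j (fun w : EC N => w i) z = if i = j then 1 else 0 := by
  have h : (fun w : EC N => w i) = coordL i := rfl
  unfold wdz; rw [h, (coordL i).fderiv]
  show (1/2 : ℂ) * ((EuclideanSpace.single j (1:ℂ)) i
      - Complex.I * (EuclideanSpace.single j (Complex.I)) i) = _
  rw [EuclideanSpace.single_apply, EuclideanSpace.single_apply]
  by_cases hij : i = j
  · subst hij; simp; try norm_num
  · simp [if_neg hij, if_neg (fun h : _ = _ => hij h.symm)]

lemma wdzbar_coord (z : EC N) (i j : Fin N) :
    wdzbar j (fun w : EC N => w i) z = 0 := by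
  have h : (fun w : EC N => w i) = coordL i := rfl
  unfold wdzbar; rw [h, (coordL i).fderiv]
  show (1/2 : ℂ) * ((EuclideanSpace.single j (1:ℂ)) i
      + Complex.I * (EuclideanSpace.single j (Complex.I)) i) = _
  rw [EuclideanSpace.single_apply, EuclideanSpace.single_apply]
  by_cases hij : i = j
  · subst hij; simp; try norm_num
  · simp [if_neg hij, if_neg (fun h : _ = _ => hij h.symm)]

lemma wdz_coordbar (z : EC N) (i j : Fin N) :
    wdz j (fun w : EC N => conj (w i)) z = 0 := by
  have h : (fun w : EC N => conj (w i)) = coordbarL i := rfl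
  unfold wdz; rw [h, (coordbarL i).fderiv]
  show (1/2 : ℂ) * (conj ((EuclideanSpace.single j (1:ℂ)) i)
      - Complex.I * conj ((EuclideanSpace.single j (Complex.I)) i)) = _
  rw [EuclideanSpace.single_apply, EuclideanSpace.single_apply]
  by_cases hij : i = j
  · subst hij; simp; try norm_num
  · simp [if_neg hij, if_neg (fun h : _ = _ => hij h.symm)]

lemma wdzbar_coordbar (z : EC N) (i j : Fin N) :
    wdzbar j (fun w : EC N => conj (w i)) z = if i = j then 1 else 0 := by
  have h : (fun w : EC N => conj (w i)) = coordbarL i := rfl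
  unfold wdzbar; rw [h, (coordbarL i).fderiv]
  show (1/2 : ℂ) * (conj ((EuclideanSpace.single j (1:ℂ)) i)
      + Complex.I * conj ((EuclideanSpace.single j (Complex.I)) i)) = _
  rw [EuclideanSpace.single_apply, EuclideanSpace.single_apply]
  by_cases hij : i = j
  · subst hij; simp; try norm_num
  · simp [if_neg hij, if_neg (fun h : _ = _ => hij h.symm)]

lemma wdz_sub {f g : EC N → ℂ} {z : EC N} (j : Fin N)
    (hf : DifferentiableAt ℝ f z) (hg : DifferentiableAt ℝ g z) :
    wdz j (fun w => f w - g w) z = wdz j f z - wdz j g z := by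
  unfold wdz; rw [fderiv_fun_sub hf hg]; simp; ring

lemma wdzbar_sub {f g : EC N → ℂ} {z : EC N} (j : Fin N)
    (hf : DifferentiableAt ℝ f z) (hg : DifferentiableAt ℝ g z) :
    wdzbar j (fun w => f w - g w) z = wdzbar j f z - wdzbar j g z := by
  unfold wdzbar; rw [fderiv_fun_sub hf hg]; simp; ring

/-- `Rr z = |z|²` as a complex number. -/
def Rr (z : EC N) : ℂ := ∑ j, z j * conj (z j)

lemma Rr_eq_norm (z : EC N) : Rr z = ((‖z‖ ^ 2 : ℝ) : ℂ) := by
  unfold Rr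
  rw [EuclideanSpace.norm_eq]
  rw [Real.sq_sqrt (by positivity)]
  push_cast
  exact Finset.sum_congr rfl fun i _ => by
    rw [Complex.mul_conj]; norm_cast
    rw [← Complex.sq_norm]

lemma contDiff_coord (i : Fin N) : ContDiff ℝ (⊤ : ℕ∞) (fun w : EC N => w i) := by
  have h : (fun w : EC N => w i) = coordL i := rfl
  rw [h]; exact (coordL i).contDiff

lemma contDiff_coordbar (i : Fin N) : ContDiff ℝ (⊤ : ℕ∞) (fun w : EC N => conj (w i)) := by
  have h : (fun w : EC N => conj (w i)) = coordbarL i := rfl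
  rw [h]; exact (coordbarL i).contDiff

lemma contDiff_Rr : ContDiff ℝ (⊤ : ℕ∞) (Rr (N := N)) := by
  unfold Rr
  exact ContDiff.sum fun i _ => (contDiff_coord i).mul (contDiff_coordbar i)

lemma contDiff_uK (k : ℕ) : ContDiff ℝ (⊤ : ℕ∞) (fun w : EC N => (1 - Rr w) ^ k) :=
  (contDiff_const.sub contDiff_Rr).pow k

lemma diffAt_of_smooth {f : EC N → ℂ} (hf : ContDiffOn ℝ (⊤ : ℕ∞) f (ball 0 1))
    {z : EC N} (hz : z ∈ ball (0 : EC N) 1) : DifferentiableAt ℝ f z :=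
  (hf.contDiffAt (isOpen_ball.mem_nhds hz)).differentiableAt (by simp)

lemma contDiffOn_wdz {f : EC N → ℂ} (hf : ContDiffOn ℝ (⊤ : ℕ∞) f (ball 0 1)) (j : Fin N) :
    ContDiffOn ℝ (⊤ : ℕ∞) (wdz j f) (ball (0 : EC N) 1) := by
  have h : ContDiffOn ℝ (⊤ : ℕ∞) (fderiv ℝ f) (ball (0 : EC N) 1) :=
    hf.fderiv_of_isOpen isOpen_ball (by simp)
  have h1 := h.clm_apply (contDiffOn_const (c := EuclideanSpace.single j (1 : ℂ)))
  have h2 := h.clm_apply (contDiffOn_const (c := EuclideanSpace.single j Complex.I))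
  exact contDiffOn_const.mul (h1.sub (contDiffOn_const.mul h2))

lemma contDiffOn_wdzbar {f : EC N → ℂ} (hf : ContDiffOn ℝ (⊤ : ℕ∞) f (ball 0 1)) (j : Fin N) :
    ContDiffOn ℝ (⊤ : ℕ∞) (wdzbar j f) (ball (0 : EC N) 1) := by
  have h : ContDiffOn ℝ (⊤ : ℕ∞) (fderiv ℝ f) (ball (0 : EC N) 1) :=
    hf.fderiv_of_isOpen isOpen_ball (by simp)
  have h1 := h.clm_apply (contDiffOn_const (c := EuclideanSpace.single j (1 : ℂ)))
  have h2 := h.clm_apply (contDiffOn_const (c := EuclideanSpace.single j Complex.I))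
  exact contDiffOn_const.mul (h1.add (contDiffOn_const.mul h2))

lemma contDiffOn_Eop {f : EC N → ℂ} (hf : ContDiffOn ℝ (⊤ : ℕ∞) f (ball 0 1)) :
    ContDiffOn ℝ (⊤ : ℕ∞) (Eop f) (ball (0 : EC N) 1) := by
  unfold Eop
  exact ContDiffOn.sum fun i _ => ((contDiff_coord i).contDiffOn).mul (contDiffOn_wdz hf i)

lemma contDiffOn_Ebarop {f : EC N → ℂ} (hf : ContDiffOn ℝ (⊤ : ℕ∞) f (ball 0 1)) :
    ContDiffOn ℝ (⊤ : ℕ∞) (Ebarop f) (ball (0 : EC N) 1) := by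
  unfold Ebarop
  exact ContDiffOn.sum fun i _ => ((contDiff_coordbar i).contDiffOn).mul (contDiffOn_wdzbar hf i)

lemma contDiffOn_lapOp {f : EC N → ℂ} (hf : ContDiffOn ℝ (⊤ : ℕ∞) f (ball 0 1)) :
    ContDiffOn ℝ (⊤ : ℕ∞) (lapOp f) (ball (0 : EC N) 1) := by
  unfold lapOp
  exact ContDiffOn.sum fun i _ => contDiffOn_wdz (contDiffOn_wdzbar hf i) i

lemma contDiffOn_stepOp {f : EC N → ℂ} (hf : ContDiffOn ℝ (⊤ : ℕ∞) f (ball 0 1)) (s : ℝ) :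
    ContDiffOn ℝ (⊤ : ℕ∞) (stepOp s f) (ball (0 : EC N) 1) := by
  unfold stepOp
  have h1 : ContDiffOn ℝ (⊤ : ℕ∞) (fun w => Ebarop f w + (s : ℂ) * f w) (ball (0 : EC N) 1) :=
    (contDiffOn_Ebarop hf).add (contDiffOn_const.mul hf)
  exact ((contDiffOn_Eop h1).add
    (contDiffOn_const.mul ((contDiffOn_Ebarop hf).add (contDiffOn_const.mul hf)))).sub
    (contDiffOn_lapOp hf)

lemma contDiffOn_iterOp {f : EC N → ℂ} (hf : ContDiffOn ℝ (⊤ : ℕ∞) f (ball 0 1)) (m : ℕ) :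
    ContDiffOn ℝ (⊤ : ℕ∞) (iterOp m f) (ball (0 : EC N) 1) := by
  induction m with
  | zero => exact contDiffOn_stepOp hf 0
  | succ n ih => exact contDiffOn_stepOp ih (n + 1)

lemma wdz_congrOn {f g : EC N → ℂ} (h : ∀ w ∈ ball (0 : EC N) 1, f w = g w)
    {z : EC N} (hz : z ∈ ball (0 : EC N) 1) (j : Fin N) : wdz j f z = wdz j g z :=
  wdz_congr j (Filter.eventuallyEq_of_mem (isOpen_ball.mem_nhds hz) h)

lemma wdzbar_congrOn {f g : EC N → ℂ} (h : ∀ w ∈ ball (0 : EC N) 1, f w = g w)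
    {z : EC N} (hz : z ∈ ball (0 : EC N) 1) (j : Fin N) : wdzbar j f z = wdzbar j g z :=
  wdzbar_congr j (Filter.eventuallyEq_of_mem (isOpen_ball.mem_nhds hz) h)

lemma Eop_congrOn {f g : EC N → ℂ} (h : ∀ w ∈ ball (0 : EC N) 1, f w = g w)
    {z : EC N} (hz : z ∈ ball (0 : EC N) 1) : Eop f z = Eop g z := by
  unfold Eop
  exact Finset.sum_congr rfl fun i _ => by rw [wdz_congrOn h hz i]

lemma Ebarop_congrOn {f g : EC N → ℂ} (h : ∀ w ∈ ball (0 : EC N) 1, f w = g w)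
    {z : EC N} (hz : z ∈ ball (0 : EC N) 1) : Ebarop f z = Ebarop g z := by
  unfold Ebarop
  exact Finset.sum_congr rfl fun i _ => by rw [wdzbar_congrOn h hz i]

lemma lapOp_congrOn {f g : EC N → ℂ} (h : ∀ w ∈ ball (0 : EC N) 1, f w = g w)
    {z : EC N} (hz : z ∈ ball (0 : EC N) 1) : lapOp f z = lapOp g z := by
  unfold lapOp
  refine Finset.sum_congr rfl fun i _ => ?_
  exact wdz_congrOn (fun w hw => wdzbar_congrOn h hw i) hz i

lemma pow_pred_mul (A : ℂ) (k : ℕ) : (k : ℂ) * A ^ (k - 1) * A = (k : ℂ) * A ^ k := by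
  cases k with
  | zero => simp
  | succ n => simp only [Nat.add_sub_cancel]; rw [mul_assoc, ← pow_succ]

lemma wdz_Rr (z : EC N) (j : Fin N) : wdz j (Rr (N := N)) z = conj (z j) := by
  have h1 : wdz j (Rr (N := N)) z
      = ∑ i, wdz j (fun w : EC N => w i * conj (w i)) z :=
    wdz_sum Finset.univ j (fun i _ =>
      (((contDiff_coord i).mul (contDiff_coordbar i)).differentiable (by simp)).differentiableAt)
  rw [h1, Finset.sum_congr rfl (fun i _ => wdz_mul j
    ((contDiff_coord i).differentiable (by simp)).differentiableAt
    ((contDiff_coordbar i).differentiable (by simp)).differentiableAt)]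
  simp [wdz_coord, wdz_coordbar]

lemma wdzbar_Rr (z : EC N) (j : Fin N) : wdzbar j (Rr (N := N)) z = z j := by
  have h1 : wdzbar j (Rr (N := N)) z
      = ∑ i, wdzbar j (fun w : EC N => w i * conj (w i)) z :=
    wdzbar_sum Finset.univ j (fun i _ =>
      (((contDiff_coord i).mul (contDiff_coordbar i)).differentiable (by simp)).differentiableAt)
  rw [h1, Finset.sum_congr rfl (fun i _ => wdzbar_mul j
    ((contDiff_coord i).differentiable (by simp)).differentiableAt
    ((contDiff_coordbar i).differentiable (by simp)).differentiableAt)]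
  simp [wdzbar_coord, wdzbar_coordbar]

lemma wdz_one_sub_Rr (z : EC N) (j : Fin N) :
    wdz j (fun w : EC N => 1 - Rr w) z = -conj (z j) := by
  rw [wdz_sub j (differentiableAt_const 1)
    ((contDiff_Rr.differentiable (by simp)).differentiableAt)]
  rw [wdz_const, wdz_Rr]; ring

lemma wdzbar_one_sub_Rr (z : EC N) (j : Fin N) :
    wdzbar j (fun w : EC N => 1 - Rr w) z = -(z j) := by
  rw [wdzbar_sub j (differentiableAt_const 1)
    ((contDiff_Rr.differentiable (by simp)).differentiableAt)]
  rw [wdzbar_const, wdzbar_Rr]; ring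

lemma wdz_uK (z : EC N) (j : Fin N) (k : ℕ) :
    wdz j (fun w : EC N => (1 - Rr w) ^ k) z
      = -(k : ℂ) * (1 - Rr z) ^ (k - 1) * conj (z j) := by
  induction k with
  | zero => simpa using wdz_const z j 1
  | succ n ih =>
    have h : (fun w : EC N => (1 - Rr w) ^ (n + 1))
        = fun w => (1 - Rr w) * (1 - Rr w) ^ n := by
      funext w; rw [pow_succ]; ring
    rw [h, wdz_mul j ((contDiff_const.sub contDiff_Rr).differentiable (by simp)).differentiableAt
      (((contDiff_uK n).differentiable (by simp)).differentiableAt)]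
    rw [wdz_one_sub_Rr, ih]
    simp only [Nat.add_sub_cancel]
    linear_combination (norm := (push_cast; ring)) (-(conj (z j))) * pow_pred_mul (1 - Rr z) n

lemma wdzbar_uK (z : EC N) (j : Fin N) (k : ℕ) :
    wdzbar j (fun w : EC N => (1 - Rr w) ^ k) z
      = -(k : ℂ) * (1 - Rr z) ^ (k - 1) * z j := by
  induction k with
  | zero => simpa using wdzbar_const z j 1
  | succ n ih =>
    have h : (fun w : EC N => (1 - Rr w) ^ (n + 1))
        = fun w => (1 - Rr w) * (1 - Rr w) ^ n := by
      funext w; rw [pow_succ]; ring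
    rw [h, wdzbar_mul j ((contDiff_const.sub contDiff_Rr).differentiable (by simp)).differentiableAt
      (((contDiff_uK n).differentiable (by simp)).differentiableAt)]
    rw [wdzbar_one_sub_Rr, ih]
    simp only [Nat.add_sub_cancel]
    linear_combination (norm := (push_cast; ring)) (-(z j)) * pow_pred_mul (1 - Rr z) n

lemma sum_five (c1 c2 c3 c4 c5 : ℂ) (F1 F2 F3 F4 : Fin N → ℂ) :
    ∑ j, (c1 * F1 j - c2 - c3 * F2 j - c4 * F3 j + c5 * F4 j)
      = c1 * (∑ j, F1 j) - (N : ℂ) * c2 - c3 * (∑ j, F2 j) - c4 * (∑ j, F3 j)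
        + c5 * (∑ j, F4 j) := by
  rw [Finset.sum_add_distrib, Finset.sum_sub_distrib, Finset.sum_sub_distrib,
    Finset.sum_sub_distrib, ← Finset.mul_sum, ← Finset.mul_sum, ← Finset.mul_sum,
    ← Finset.mul_sum, Finset.sum_const, Finset.card_univ, Fintype.card_fin, nsmul_eq_mul]

lemma sum_three (d1 d2 d3 : ℂ) (F1 F2 F3 : Fin N → ℂ) :
    ∑ j, (d1 * F1 j + d2 * F2 j + d3 * F3 j)
      = d1 * (∑ j, F1 j) + d2 * (∑ j, F2 j) + d3 * (∑ j, F3 j) := by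
  rw [Finset.sum_add_distrib, Finset.sum_add_distrib, ← Finset.mul_sum, ← Finset.mul_sum,
    ← Finset.mul_sum]

lemma L1 {g : EC N → ℂ} (hg : ContDiffOn ℝ (⊤ : ℕ∞) g (ball 0 1)) (k : ℕ) (j : Fin N)
    {w : EC N} (hw : w ∈ ball (0 : EC N) 1) :
    wdzbar j (fun w => (1 - Rr w) ^ k * g w) w
      = (-(k : ℂ)) * ((1 - Rr w) ^ (k - 1) * (w j * g w))
        + (1 - Rr w) ^ k * wdzbar j g w := by
  rw [wdzbar_mul j (((contDiff_uK k).differentiable (by simp)).differentiableAt)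
    (diffAt_of_smooth hg hw), wdzbar_uK]
  ring

lemma L2 {g : EC N → ℂ} (hg : ContDiffOn ℝ (⊤ : ℕ∞) g (ball 0 1)) (k : ℕ)
    {w : EC N} (hw : w ∈ ball (0 : EC N) 1) :
    Ebarop (fun w => (1 - Rr w) ^ k * g w) w
      = (-(k : ℂ)) * ((1 - Rr w) ^ (k - 1) * (Rr w * g w))
        + (1 - Rr w) ^ k * Ebarop g w := by
  have e1 : Rr w = ∑ i, w i * conj (w i) := rfl
  have e2 : Ebarop g w = ∑ i, conj (w i) * wdzbar i g w := rfl
  calc Ebarop (fun w => (1 - Rr w) ^ k * g w) w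
      = ∑ i, (((-(k : ℂ)) * ((1 - Rr w) ^ (k - 1) * g w)) * (w i * conj (w i))
          + (1 - Rr w) ^ k * (conj (w i) * wdzbar i g w)) :=
        Finset.sum_congr rfl fun i _ => by rw [L1 hg k i hw]; ring
    _ = ((-(k : ℂ)) * ((1 - Rr w) ^ (k - 1) * g w)) * (∑ i, w i * conj (w i))
          + (1 - Rr w) ^ k * (∑ i, conj (w i) * wdzbar i g w) := by
        rw [Finset.sum_add_distrib, ← Finset.mul_sum, ← Finset.mul_sum]
    _ = _ := by rw [← e1, ← e2]; ring

lemma L3 {g : EC N → ℂ} (hg : ContDiffOn ℝ (⊤ : ℕ∞) g (ball 0 1)) (n : ℕ)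
    {z : EC N} (hz : z ∈ ball (0 : EC N) 1) :
    lapOp (fun w => (1 - Rr w) ^ (n + 1) * g w) z
      = ((n : ℂ) + 1) * (n : ℂ) * (1 - Rr z) ^ (n - 1) * g z * Rr z
        - (N : ℂ) * (((n : ℂ) + 1) * (1 - Rr z) ^ n * g z)
        - ((n : ℂ) + 1) * (1 - Rr z) ^ n * Eop g z
        - ((n : ℂ) + 1) * (1 - Rr z) ^ n * Ebarop g z
        + (1 - Rr z) ^ (n + 1) * lapOp g z := by
  have hgd : DifferentiableAt ℝ g z := diffAt_of_smooth hg hz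
  have key : ∀ j : Fin N,
      wdz j (wdzbar j (fun w => (1 - Rr w) ^ (n + 1) * g w)) z
        = (((n : ℂ) + 1) * (n : ℂ) * (1 - Rr z) ^ (n - 1) * g z) * (z j * conj (z j))
          - (((n : ℂ) + 1) * (1 - Rr z) ^ n * g z)
          - (((n : ℂ) + 1) * (1 - Rr z) ^ n) * (z j * wdz j g z)
          - (((n : ℂ) + 1) * (1 - Rr z) ^ n) * (conj (z j) * wdzbar j g z)
          + ((1 - Rr z) ^ (n + 1)) * (wdz j (wdzbar j g) z) := by
    intro j
    have hgbar : DifferentiableAt ℝ (wdzbar j g) z :=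
      diffAt_of_smooth (contDiffOn_wdzbar hg j) hz
    have hcongr : wdz j (wdzbar j (fun w => (1 - Rr w) ^ (n + 1) * g w)) z
        = wdz j (fun w => (-((n : ℕ) + 1 : ℂ)) * ((1 - Rr w) ^ n * (w j * g w))
            + (1 - Rr w) ^ (n + 1) * wdzbar j g w) z := by
      refine wdz_congrOn (fun w hw => ?_) hz j
      have h := L1 hg (n + 1) j hw
      simp only [Nat.add_sub_cancel] at h
      rw [h]; push_cast; ring
    have d1 : DifferentiableAt ℝ (fun w : EC N => w j * g w) z :=
      (((contDiff_coord j).differentiable (by simp)).differentiableAt).mul hgd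
    have d2 : DifferentiableAt ℝ (fun w : EC N => (1 - Rr w) ^ n * (w j * g w)) z :=
      (((contDiff_uK n).differentiable (by simp)).differentiableAt).mul d1
    have d3 : DifferentiableAt ℝ
        (fun w : EC N => (-((n : ℕ) + 1 : ℂ)) * ((1 - Rr w) ^ n * (w j * g w))) z :=
      d2.const_mul _
    have d4 : DifferentiableAt ℝ (fun w : EC N => (1 - Rr w) ^ (n + 1) * wdzbar j g w) z :=
      (((contDiff_uK (n + 1)).differentiable (by simp)).differentiableAt).mul hgbar
    rw [hcongr, wdz_add j d3 d4,
      wdz_const_mul j _ d2,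
      wdz_mul j (((contDiff_uK n).differentiable (by simp)).differentiableAt) d1,
      wdz_mul j (((contDiff_coord j).differentiable (by simp)).differentiableAt) hgd,
      wdz_mul j (((contDiff_uK (n + 1)).differentiable (by simp)).differentiableAt) hgbar,
      wdz_uK, wdz_uK, wdz_coord]
    simp only [Nat.add_sub_cancel, if_pos rfl]
    push_cast
    ring
  have e1 : Rr z = ∑ j, z j * conj (z j) := rfl
  have e2 : Eop g z = ∑ j, z j * wdz j g z := rfl
  have e3 : Ebarop g z = ∑ j, conj (z j) * wdzbar j g z := rfl
  have e4 : lapOp g z = ∑ j, wdz j (wdzbar j g) z := rfl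
  calc lapOp (fun w => (1 - Rr w) ^ (n + 1) * g w) z
      = ∑ j, ((((n : ℂ) + 1) * (n : ℂ) * (1 - Rr z) ^ (n - 1) * g z) * (z j * conj (z j))
          - (((n : ℂ) + 1) * (1 - Rr z) ^ n * g z)
          - (((n : ℂ) + 1) * (1 - Rr z) ^ n) * (z j * wdz j g z)
          - (((n : ℂ) + 1) * (1 - Rr z) ^ n) * (conj (z j) * wdzbar j g z)
          + ((1 - Rr z) ^ (n + 1)) * (wdz j (wdzbar j g) z)) :=
        Finset.sum_congr rfl fun j _ => key j
    _ = _ := by rw [sum_five, ← e1, ← e2, ← e3, ← e4]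

lemma L4 {g : EC N → ℂ} (hg : ContDiffOn ℝ (⊤ : ℕ∞) g (ball 0 1)) (n : ℕ)
    {z : EC N} (hz : z ∈ ball (0 : EC N) 1) :
    Eop (Ebarop (fun w => (1 - Rr w) ^ (n + 1) * g w)) z
      = (((n : ℂ) + 1) * (n : ℂ) * (1 - Rr z) ^ (n - 1) * Rr z * g z
          - ((n : ℂ) + 1) * (1 - Rr z) ^ n * g z
          - ((n : ℂ) + 1) * (1 - Rr z) ^ n * Ebarop g z) * Rr z
        - ((n : ℂ) + 1) * (1 - Rr z) ^ n * Rr z * Eop g z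
        + (1 - Rr z) ^ (n + 1) * Eop (Ebarop g) z := by
  have hgd : DifferentiableAt ℝ g z := diffAt_of_smooth hg hz
  have hgE : DifferentiableAt ℝ (Ebarop g) z := diffAt_of_smooth (contDiffOn_Ebarop hg) hz
  have key : ∀ j : Fin N,
      z j * wdz j (Ebarop (fun w => (1 - Rr w) ^ (n + 1) * g w)) z
        = (((n : ℂ) + 1) * (n : ℂ) * (1 - Rr z) ^ (n - 1) * Rr z * g z
            - ((n : ℂ) + 1) * (1 - Rr z) ^ n * g z
            - ((n : ℂ) + 1) * (1 - Rr z) ^ n * Ebarop g z) * (z j * conj (z j))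
          + (-(((n : ℂ) + 1) * (1 - Rr z) ^ n * Rr z)) * (z j * wdz j g z)
          + ((1 - Rr z) ^ (n + 1)) * (z j * wdz j (Ebarop g) z) := by
    intro j
    have hcongr : wdz j (Ebarop (fun w => (1 - Rr w) ^ (n + 1) * g w)) z
        = wdz j (fun w => (-((n : ℕ) + 1 : ℂ)) * ((1 - Rr w) ^ n * (Rr w * g w))
            + (1 - Rr w) ^ (n + 1) * Ebarop g w) z := by
      refine wdz_congrOn (fun w hw => ?_) hz j
      have h := L2 hg (n + 1) hw
      simp only [Nat.add_sub_cancel] at h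
      rw [h]; push_cast; ring
    have d1 : DifferentiableAt ℝ (fun w : EC N => Rr w * g w) z :=
      ((contDiff_Rr.differentiable (by simp)).differentiableAt).mul hgd
    have d2 : DifferentiableAt ℝ (fun w : EC N => (1 - Rr w) ^ n * (Rr w * g w)) z :=
      (((contDiff_uK n).differentiable (by simp)).differentiableAt).mul d1
    have d3 : DifferentiableAt ℝ
        (fun w : EC N => (-((n : ℕ) + 1 : ℂ)) * ((1 - Rr w) ^ n * (Rr w * g w))) z :=
      d2.const_mul _
    have d4 : DifferentiableAt ℝ (fun w : EC N => (1 - Rr w) ^ (n + 1) * Ebarop g w) z :=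
      (((contDiff_uK (n + 1)).differentiable (by simp)).differentiableAt).mul hgE
    rw [hcongr, wdz_add j d3 d4,
      wdz_const_mul j _ d2,
      wdz_mul j (((contDiff_uK n).differentiable (by simp)).differentiableAt) d1,
      wdz_mul j ((contDiff_Rr.differentiable (by simp)).differentiableAt) hgd,
      wdz_mul j (((contDiff_uK (n + 1)).differentiable (by simp)).differentiableAt) hgE,
      wdz_uK, wdz_uK, wdz_Rr]
    simp only [Nat.add_sub_cancel]
    push_cast
    ring
  have e1 : Rr z = ∑ j, z j * conj (z j) := rfl
  have e2 : Eop g z = ∑ j, z j * wdz j g z := rfl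
  have e5 : Eop (Ebarop g) z = ∑ j, z j * wdz j (Ebarop g) z := rfl
  calc Eop (Ebarop (fun w => (1 - Rr w) ^ (n + 1) * g w)) z
      = ∑ j, ((((n : ℂ) + 1) * (n : ℂ) * (1 - Rr z) ^ (n - 1) * Rr z * g z
            - ((n : ℂ) + 1) * (1 - Rr z) ^ n * g z
            - ((n : ℂ) + 1) * (1 - Rr z) ^ n * Ebarop g z) * (z j * conj (z j))
          + (-(((n : ℂ) + 1) * (1 - Rr z) ^ n * Rr z)) * (z j * wdz j g z)
          + ((1 - Rr z) ^ (n + 1)) * (z j * wdz j (Ebarop g) z)) :=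
        Finset.sum_congr rfl fun j _ => key j
    _ = _ := by rw [sum_three, ← e1, ← e2, ← e5]; ring

lemma cast_norm_ball (z : EC N) : (((1 : ℝ) - ‖z‖ ^ 2 : ℝ) : ℂ) = 1 - Rr z := by
  rw [Rr_eq_norm]; push_cast; ring

lemma Eop_add_const_mul {g : EC N → ℂ} (c : ℂ) {z : EC N}
    (h1 : DifferentiableAt ℝ (Ebarop g) z) (h2 : DifferentiableAt ℝ g z) :
    Eop (fun w => Ebarop g w + c * g w) z = Eop (Ebarop g) z + c * Eop g z := by
  have e1 : Eop (Ebarop g) z = ∑ j, z j * wdz j (Ebarop g) z := rfl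
  have e2 : Eop g z = ∑ j, z j * wdz j g z := rfl
  calc Eop (fun w => Ebarop g w + c * g w) z
      = ∑ j, (z j * wdz j (Ebarop g) z + c * (z j * wdz j g z)) :=
        Finset.sum_congr rfl fun j _ => by
          rw [wdz_add j h1 (h2.const_mul c), wdz_const_mul j c h2]; ring
    _ = _ := by
        rw [Finset.sum_add_distrib, ← Finset.mul_sum, ← e1, ← e2]

lemma key_step {g : EC N → ℂ} (hg : ContDiffOn ℝ (⊤ : ℕ∞) g (ball 0 1)) (n : ℕ)
    {z : EC N} (hz : z ∈ ball (0 : EC N) 1) :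
    ((n : ℂ) + 1) * (((n : ℂ) + 1) - (N : ℂ)) * ((1 - Rr z) ^ (n + 1) * g z)
      - invLap (fun w => (1 - Rr w) ^ (n + 1) * g w) z
      = (1 - Rr z) ^ (n + 2) * stepOp ((n : ℝ) + 1) g z := by
  have hgd : DifferentiableAt ℝ g z := diffAt_of_smooth hg hz
  have hgE : DifferentiableAt ℝ (Ebarop g) z := diffAt_of_smooth (contDiffOn_Ebarop hg) hz
  unfold invLap stepOp
  rw [cast_norm_ball, L3 hg n hz, L4 hg n hz,
    Eop_add_const_mul (((n : ℝ) + 1 : ℝ) : ℂ) hgE hgd]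
  push_cast
  cases n with
  | zero => ring
  | succ p =>
    simp only [Nat.add_sub_cancel]
    push_cast
    ring

lemma main_ind {ψ : EC N → ℂ} (hψ : ContDiffOn ℝ (⊤ : ℕ∞) ψ (ball 0 1)) (m : ℕ) :
    ∀ z ∈ ball (0 : EC N) 1,
      prodOp N m ψ z = (1 - Rr z) ^ (m + 1) * iterOp m ψ z := by
  induction m with
  | zero =>
    intro z hz
    have hstep : (fun w : EC N => Ebarop ψ w + ((0 : ℝ) : ℂ) * ψ w) = Ebarop ψ := by
      funext w; simp
    show (0 : ℂ) * ((0 : ℂ) - (N : ℂ)) * ψ z - invLap ψ z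
        = (1 - Rr z) ^ 1 * stepOp 0 ψ z
    unfold invLap stepOp
    rw [cast_norm_ball, hstep]
    push_cast
    ring
  | succ p ih =>
    intro z hz
    have hg : ContDiffOn ℝ (⊤ : ℕ∞) (iterOp p ψ) (ball 0 1) := contDiffOn_iterOp hψ p
    have hlap : lapOp (prodOp N p ψ) z
        = lapOp (fun w => (1 - Rr w) ^ (p + 1) * iterOp p ψ w) z :=
      lapOp_congrOn ih hz
    have hEE : Eop (Ebarop (prodOp N p ψ)) z
        = Eop (Ebarop (fun w => (1 - Rr w) ^ (p + 1) * iterOp p ψ w)) z :=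
      Eop_congrOn (fun w hw => Ebarop_congrOn ih hw) hz
    have hinv : invLap (prodOp N p ψ) z
        = invLap (fun w => (1 - Rr w) ^ (p + 1) * iterOp p ψ w) z := by
      unfold invLap; rw [hlap, hEE]
    show ((p : ℂ) + 1) * (((p : ℂ) + 1) - (N : ℂ)) * prodOp N p ψ z
        - invLap (prodOp N p ψ) z
        = (1 - Rr z) ^ (p + 2) * stepOp ((p : ℝ) + 1) (iterOp p ψ) z
    rw [ih z hz, hinv]
    exact key_step hg p hz
/-- Lemma 2.2, identity (2.6) of differential operators, applied to an
arbitrary smooth function on the ball. -/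
theorem stmt3 {N : ℕ} (hN : 1 ≤ N) (m : ℕ) (hm : 1 ≤ m)
    (ψ : EuclideanSpace ℂ (Fin N) → ℂ)
    (hψ : ContDiffOn ℝ (⊤ : ℕ∞) ψ (ball 0 1))
    (ξ : EuclideanSpace ℂ (Fin N)) (hξ : ξ ∈ ball (0 : EuclideanSpace ℂ (Fin N)) 1) :
    (m.factorial : ℂ) ^ 2 * ((((1 - ‖ξ‖ ^ 2 : ℝ) : ℂ)) ^ (m + 1))⁻¹ *
        (((m.factorial : ℂ) ^ 2)⁻¹ * prodOp N m ψ ξ)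
      = iterOp m ψ ξ := by
  have h := main_ind hψ m ξ hξ
  have hA : (((1 : ℝ) - ‖ξ‖ ^ 2 : ℝ) : ℂ) = 1 - Rr ξ := cast_norm_ball ξ
  have hξn : ‖ξ‖ < 1 := mem_ball_zero_iff.mp hξ
  have hpos : (0 : ℝ) < 1 - ‖ξ‖ ^ 2 := by nlinarith [norm_nonneg ξ]
  have hne : (1 : ℂ) - Rr ξ ≠ 0 := by
    rw [← hA]
    exact_mod_cast hpos.ne'
  have hfac : (m.factorial : ℂ) ≠ 0 := Nat.cast_ne_zero.mpr m.factorial_ne_zero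
  rw [hA, h]
  field_simp

end
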